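/- Let H be a division ring of finite dimension over its center k, let k(t) be the field of rational functions over k, and let L/k(t) be a finite Galois extension of commutative fields with Galois group G. Assume that Ω = H ⊗_k L is a division ring. Then: (i) for each σ ∈ G, the map σ̃ = id_H ⊗ σ is a ring automorphism of Ω fixing pointwise the image of H ⊗_k k(t) under the canonical map H ⊗_k k(t) → H ⊗_k L; (ii) the map σ ↦ σ̃ is a group isomorphism from G onto the group Γ of all ring automorphisms of Ω that fix the image of H ⊗_k k(t) pointwise; and (iii) the set of elements of Ω fixed by every element of Γ is exactly the image of H ⊗_k k(t). -/

import Mathlib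

/-!
Because `H` is central over `k`, the centralizer of `H ⊗ 1` in `H ⊗[k] L` is `1 ⊗ L`. A ring
automorphism fixing the image of `H ⊗[k] k(t)` fixes `H ⊗ 1`, hence preserves `1 ⊗ L`, and
its restriction there is some `σ ∈ Gal(L/k(t))`; the automorphism is then `id ⊗ σ`.
Conversely, writing `x = ∑ bᵢ ⊗ lᵢ` over a `k`-basis `(bᵢ)` of `H`, invariance of `x` under
every `id ⊗ σ` makes each `lᵢ` Galois-invariant, i.e. an element of `k(t)`.
-/

open TensorProduct

section

variable (k : Type*) [Field k]
  (H : Type*) [DivisionRing H] [Algebra k H]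
  (L : Type*) [Field L] [Algebra k L] [Algebra (RatFunc k) L]
  [IsScalarTower k (RatFunc k) L]

/-- The canonical map `H ⊗[k] k(t) → H ⊗[k] L`, tensor product of the identity of `H`
with the inclusion `k(t) → L`. -/
noncomputable def canMap : H ⊗[k] RatFunc k →ₐ[k] H ⊗[k] L :=
  Algebra.TensorProduct.map (AlgHom.id k H) (IsScalarTower.toAlgHom k (RatFunc k) L)

/-- For `σ ∈ Gal(L/k(t))`, the ring automorphism `σ̃ = id_H ⊗ σ` of `Ω = H ⊗[k] L`. -/
noncomputable def tildeAut (σ : L ≃ₐ[RatFunc k] L) : RingAut (H ⊗[k] L) :=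
  (Algebra.TensorProduct.congr (AlgEquiv.refl (R := k) (A₁ := H))
    (σ.restrictScalars k)).toRingEquiv

end

open Algebra.TensorProduct

section Centralizer

variable {k A B : Type*} [Field k] [Ring A] [Algebra k A] [Ring B] [Algebra k B]

theorem centralizer_range_includeLeft_eq_range_includeRight [Algebra.IsCentral k A] :
    Subalgebra.centralizer k (includeLeft : A →ₐ[k] A ⊗[k] B).range =
      (includeRight : B →ₐ[k] A ⊗[k] B).range := by
  rw [Subalgebra.centralizer_coe_range_includeLeft_eq_center_tensorProduct,
    Algebra.IsCentral.center_eq_bot, map_range]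
  simp [AlgHom.range_comp, Subalgebra.range_val]

theorem ringAut_one_tmul_mem_range_includeRight [Algebra.IsCentral k A]
    (f : RingAut (A ⊗[k] B)) (hf : ∀ a, f (a ⊗ₜ 1) = a ⊗ₜ 1) (b : B) :
    f (1 ⊗ₜ b) ∈ (includeRight : B →ₐ[k] A ⊗[k] B).range := by
  rw [← centralizer_range_includeLeft_eq_range_includeRight, Subalgebra.mem_centralizer_iff]
  rintro _ ⟨a, rfl⟩
  have hcomm : Commute (a ⊗ₜ[k] (1 : B)) (1 ⊗ₜ b) :=
    (Commute.one_right a).tmul (Commute.one_left b)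
  simpa [hf] using (hcomm.map f).eq

theorem exists_algEquiv_ringAut_one_tmul [Algebra.IsCentral k A] [Nontrivial A]
    (f : RingAut (A ⊗[k] B)) (hf : ∀ a, f (a ⊗ₜ 1) = a ⊗ₜ 1) :
    ∃ σ : B ≃ₐ[k] B, ∀ b, f (1 ⊗ₜ b) = 1 ⊗ₜ σ b := by
  have hinj : Function.Injective (includeRight : B →ₐ[k] A ⊗[k] B) :=
    includeRight_injective (algebraMap k A).injective
  have hf_symm (a : A) : f.symm (a ⊗ₜ 1) = a ⊗ₜ 1 := f.symm_apply_eq.mpr (hf a).symm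
  let f' : A ⊗[k] B ≃ₐ[k] A ⊗[k] B :=
    AlgEquiv.ofRingEquiv (f := f) fun c => by simpa using hf (algebraMap k A c)
  have hS : includeRight.range.map (f' : A ⊗[k] B →ₐ[k] A ⊗[k] B) = includeRight.range := by
    refine le_antisymm ?_ fun _ ⟨b, hb⟩ => ?_
    · rintro _ ⟨_, ⟨b, rfl⟩, rfl⟩
      exact ringAut_one_tmul_mem_range_includeRight f hf b
    · obtain ⟨b', hb'⟩ := ringAut_one_tmul_mem_range_includeRight f.symm hf_symm b
      refine ⟨includeRight b', ⟨b', rfl⟩, ?_⟩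
      simpa [f', ← hb] using (f.symm_apply_eq.mp hb'.symm).symm
  let e := AlgEquiv.ofInjective _ hinj
  refine ⟨e.trans ((f'.subalgebraMap _).trans ((Subalgebra.equivOfEq _ _ hS).trans e.symm)),
    fun b => ?_⟩
  exact (congrArg Subtype.val (e.apply_symm_apply ⟨f (1 ⊗ₜ b), _⟩)).symm

end Centralizer

section GaloisAction

variable (k A F L : Type*) [Field k] [Ring A] [Algebra k A] [Field F] [Algebra k F]
  [Field L] [Algebra k L] [Algebra F L] [IsScalarTower k F L]

noncomputable def lTensorRingAut : (L ≃ₐ[F] L) →* RingAut (A ⊗[k] L) where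
  toFun σ := (congr (AlgEquiv.refl : A ≃ₐ[k] A) (σ.restrictScalars k)).toRingEquiv
  map_one' := RingEquiv.ext fun x => by
    induction x with
    | zero => simp
    | tmul a l => rfl
    | add x y hx hy => simp_all
  map_mul' σ τ := RingEquiv.ext fun x => by
    change _ = congr (AlgEquiv.refl : A ≃ₐ[k] A) (σ.restrictScalars k)
      (congr (AlgEquiv.refl : A ≃ₐ[k] A) (τ.restrictScalars k) x)
    induction x with
    | zero => simp
    | tmul a l => rfl
    | add x y hx hy => simp_all

variable {k A F L}

@[simp]
theorem lTensorRingAut_tmul (σ : L ≃ₐ[F] L) (a : A) (l : L) :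
    lTensorRingAut k A F L σ (a ⊗ₜ l) = a ⊗ₜ[k] σ l := rfl

theorem lTensorRingAut_map (σ : L ≃ₐ[F] L) (y : A ⊗[k] F) :
    lTensorRingAut k A F L σ (map (AlgHom.id k A) (IsScalarTower.toAlgHom k F L) y) =
      map (AlgHom.id k A) (IsScalarTower.toAlgHom k F L) y := by
  induction y with
  | zero => simp
  | tmul a c => simp
  | add x y hx hy => simp_all

theorem lTensorRingAut_injective [Nontrivial A] :
    Function.Injective (lTensorRingAut k A F L) := by
  intro σ τ h
  ext l
  apply includeRight_injective (A := A) (algebraMap k A).injective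
  simpa using congr($h (1 ⊗ₜ l))

theorem exists_lTensorRingAut_eq [Algebra.IsCentral k A] [Nontrivial A]
    (f : RingAut (A ⊗[k] L))
    (hf : ∀ y, f (map (AlgHom.id k A) (IsScalarTower.toAlgHom k F L) y) =
      map (AlgHom.id k A) (IsScalarTower.toAlgHom k F L) y) :
    ∃ σ, lTensorRingAut k A F L σ = f := by
  have hinj := includeRight_injective (A := A) (B := L) (algebraMap k A).injective
  have hf_left (a : A) : f (a ⊗ₜ 1) = a ⊗ₜ 1 := by simpa using hf (a ⊗ₜ 1)
  obtain ⟨σ, hσ⟩ := exists_algEquiv_ringAut_one_tmul f hf_left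
  refine ⟨AlgEquiv.ofRingEquiv (f := σ.toRingEquiv) fun c => hinj ?_, ?_⟩
  · simpa [← hσ] using hf (1 ⊗ₜ c)
  · ext x
    induction x with
    | zero => simp
    | tmul a l =>
      have hsplit : a ⊗ₜ[k] l = (a ⊗ₜ 1) * (1 ⊗ₜ l) := by simp
      rw [lTensorRingAut_tmul, hsplit, map_mul, hf_left, hσ, tmul_mul_tmul, one_mul, mul_one]
      rfl
    | add x y hx hy => simp_all

theorem mem_range_map_of_forall_lTensorRingAut_apply_eq [IsGalois F L] (x : A ⊗[k] L)
    (hx : ∀ σ, lTensorRingAut k A F L σ x = x) :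
    x ∈ Set.range (map (AlgHom.id k A) (IsScalarTower.toAlgHom k F L)) := by
  let b := Module.Free.chooseBasis k A
  obtain ⟨c, rfl⟩ := TensorProduct.eq_repr_basis_left b x
  have hfix (σ : L ≃ₐ[F] L) (i) : σ (c i) = c i := by
    have : c.mapRange σ (map_zero σ) = c := TensorProduct.sum_tmul_basis_left_injective b <| by
      have h := hx σ
      simp only [map_finsuppSum, lTensorRingAut_tmul] at h
      rw [Finsupp.lsum_apply, Finsupp.lsum_apply, Finsupp.sum_mapRange_index (by simp)]
      exact h
    simpa using congr($this i)
  choose d hd using fun i =>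
    (InfiniteGalois.mem_range_algebraMap_iff_fixed (c i)).mpr (hfix · i)
  refine ⟨c.sum fun i _ => b i ⊗ₜ d i, ?_⟩
  simp only [map_finsuppSum, Algebra.TensorProduct.map_tmul, AlgHom.id_apply,
    IsScalarTower.coe_toAlgHom', hd]
  exact Finsupp.sum_congr fun i _ => rfl

end GaloisAction

theorem galois_tensor_extension_general
    (k : Type*) [Field k]
    (H : Type*) [DivisionRing H] [Algebra k H]
    (hcenter : Subalgebra.center k H = ⊥)
    (L : Type*) [Field L] [Algebra k L] [Algebra (RatFunc k) L]
    [IsScalarTower k (RatFunc k) L]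
    [IsGalois (RatFunc k) L] :
    -- (i) each `σ̃` fixes the image of `H ⊗[k] k(t)` pointwise
    (∀ σ : L ≃ₐ[RatFunc k] L, ∀ y ∈ Set.range (canMap k H L),
        tildeAut k H L σ y = y) ∧
    -- (ii) `σ ↦ σ̃` is a group isomorphism from `G` onto `Γ`
    (∀ σ τ : L ≃ₐ[RatFunc k] L,
        tildeAut k H L (σ * τ) = tildeAut k H L σ * tildeAut k H L τ) ∧
    Function.Injective (tildeAut k H L) ∧
    (∀ f : RingAut (H ⊗[k] L), (∀ y ∈ Set.range (canMap k H L), f y = y) →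
        ∃ σ : L ≃ₐ[RatFunc k] L, tildeAut k H L σ = f) ∧
    -- (iii) the fixed elements of `Γ` are exactly the image of `H ⊗[k] k(t)`
    (∀ x : H ⊗[k] L,
        (∀ f : RingAut (H ⊗[k] L), (∀ y ∈ Set.range (canMap k H L), f y = y) → f x = x)
          ↔ x ∈ Set.range (canMap k H L)) := by
  have : Algebra.IsCentral k H := ⟨hcenter.le⟩
  have htilde : tildeAut k H L = lTensorRingAut k H (RatFunc k) L := rfl
  rw [htilde]
  have hfix (σ : L ≃ₐ[RatFunc k] L) : ∀ y ∈ Set.range (canMap k H L),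
      lTensorRingAut k H (RatFunc k) L σ y = y := by
    rintro _ ⟨y, rfl⟩
    exact lTensorRingAut_map σ y
  refine ⟨hfix, map_mul _, lTensorRingAut_injective,
    fun f hf => exists_lTensorRingAut_eq f fun y => hf _ ⟨y, rfl⟩,
    fun x => ⟨fun hx => ?_, ?_⟩⟩
  · exact mem_range_map_of_forall_lTensorRingAut_apply_eq x fun σ => hx _ (hfix σ)
  · rintro ⟨y, rfl⟩ f hf
    exact hf _ ⟨y, rfl⟩

/-- **Proposition 5.** Let `H` be a division ring of finite dimension over its center `k`,
let `L/k(t)` be a finite Galois extension of commutative fields with group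
`G = Gal(L/k(t))`, and assume `Ω = H ⊗[k] L` is a division ring. Then:
(i) for every `σ ∈ G`, the automorphism `σ̃ = id_H ⊗ σ` of `Ω` fixes the image of
`H ⊗[k] k(t)` pointwise;
(ii) `σ ↦ σ̃` is a group isomorphism from `G` onto the group `Γ` of all ring automorphisms
of `Ω` fixing the image of `H ⊗[k] k(t)` pointwise;
(iii) the elements of `Ω` fixed by every element of `Γ` are exactly the image of
`H ⊗[k] k(t)`.  In other words, `Ω/H(t)` is Galois of group `G`. -/
theorem galois_tensor_extension
    (k : Type*) [Field k]
    (H : Type*) [DivisionRing H] [Algebra k H] [FiniteDimensional k H]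
    (hcenter : Subalgebra.center k H = ⊥)
    (L : Type*) [Field L] [Algebra k L] [Algebra (RatFunc k) L]
    [IsScalarTower k (RatFunc k) L]
    [FiniteDimensional (RatFunc k) L] [IsGalois (RatFunc k) L]
    (hdiv : Nontrivial (H ⊗[k] L) ∧ ∀ x : H ⊗[k] L, x ≠ 0 → IsUnit x) :
    -- (i) each `σ̃` fixes the image of `H ⊗[k] k(t)` pointwise
    (∀ σ : L ≃ₐ[RatFunc k] L, ∀ y ∈ Set.range (canMap k H L),
        tildeAut k H L σ y = y) ∧
    -- (ii) `σ ↦ σ̃` is a group isomorphism from `G` onto `Γ`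
    (∀ σ τ : L ≃ₐ[RatFunc k] L,
        tildeAut k H L (σ * τ) = tildeAut k H L σ * tildeAut k H L τ) ∧
    Function.Injective (tildeAut k H L) ∧
    (∀ f : RingAut (H ⊗[k] L), (∀ y ∈ Set.range (canMap k H L), f y = y) →
        ∃ σ : L ≃ₐ[RatFunc k] L, tildeAut k H L σ = f) ∧
    -- (iii) the fixed elements of `Γ` are exactly the image of `H ⊗[k] k(t)`
    (∀ x : H ⊗[k] L,
        (∀ f : RingAut (H ⊗[k] L), (∀ y ∈ Set.range (canMap k H L), f y = y) → f x = x)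
          ↔ x ∈ Set.range (canMap k H L)) :=
  galois_tensor_extension_general k H hcenter L
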